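/- Let ε be a real random variable with E(ε) = 0 and E|ε|^{2+δ} = M_δ < ∞ for some δ ≥ 0. Then for every τ > 0, ψ_τ(ε) is integrable and the robustification bias satisfies |E[ψ_τ(ε)]| ≤ M_δ/τ^{1+δ}. -/
import Mathlib


open MeasureTheory

/-- The Huber score function `ψ_τ(u) = sgn(u) · min{|u|, τ}`. -/
noncomputable def huberScore (τ u : ℝ) : ℝ := Real.sign u * min |u| τ

lemma real_sign_mul_abs (u : ℝ) : Real.sign u * |u| = u := by
  rcases lt_trichotomy u 0 with h|h|h
  · rw [Real.sign_of_neg h, abs_of_neg h]; ring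
  · simp [h]
  · rw [Real.sign_of_pos h, abs_of_pos h]; ring

lemma measurable_realSign : Measurable Real.sign := by
  unfold Real.sign
  exact Measurable.ite measurableSet_Iio measurable_const
    (Measurable.ite measurableSet_Ioi measurable_const measurable_const)

lemma measurable_huberScore (τ : ℝ) : Measurable (huberScore τ) := by
  unfold huberScore
  exact measurable_realSign.mul ((measurable_id.abs).min measurable_const)

lemma huberScore_abs_le (τ u : ℝ) (hτ : 0 ≤ τ) : |huberScore τ u| ≤ τ := by
  unfold huberScore
  rw [abs_mul]
  rcases eq_or_ne u 0 with h | h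
  · simp [h, hτ]
  · have hs : |Real.sign u| = 1 := by
      rcases lt_or_gt_of_ne h with h' | h'
      · rw [Real.sign_of_neg h']; norm_num
      · rw [Real.sign_of_pos h']; norm_num
    rw [hs, one_mul, abs_of_nonneg (le_min (abs_nonneg u) hτ)]
    exact min_le_right _ _

lemma huberScore_pointwise (τ u δ : ℝ) (hτ : 0 < τ) (hδ : 0 ≤ δ) :
    |u - huberScore τ u| ≤ |u| ^ ((2 : ℝ) + δ) / τ ^ ((1 : ℝ) + δ) := by
  have hrpos : 0 < τ ^ ((1 : ℝ) + δ) := Real.rpow_pos_of_pos hτ _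
  rcases le_or_gt |u| τ with h | h
  · have : huberScore τ u = u := by
      unfold huberScore
      rw [min_eq_left h, real_sign_mul_abs]
    rw [this, sub_self, abs_zero]
    positivity
  · have hu : 0 < |u| := hτ.trans h
    have hhs : huberScore τ u = Real.sign u * τ := by
      unfold huberScore; rw [min_eq_right h.le]
    have habs : |u - huberScore τ u| = |u| - τ := by
      rw [hhs]
      nth_rewrite 1 [← real_sign_mul_abs u]
      rw [← mul_sub, abs_mul]
      have hs : |Real.sign u| = 1 := by
        rcases lt_or_gt_of_ne (abs_pos.mp hu) with h' | h'
        · rw [Real.sign_of_neg h']; norm_num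
        · rw [Real.sign_of_pos h']; norm_num
      rw [hs, one_mul, abs_of_nonneg (by linarith)]
    rw [habs, show (2:ℝ)+δ = 1 + (1+δ) by ring, Real.rpow_add hu, Real.rpow_one]
    have h1 : τ ^ ((1:ℝ)+δ) ≤ |u| ^ ((1:ℝ)+δ) :=
      Real.rpow_le_rpow hτ.le h.le (by linarith)
    have h2 : |u| ≤ |u| * |u| ^ ((1:ℝ)+δ) / τ ^ ((1:ℝ)+δ) := by
      rw [le_div_iff₀ hrpos]
      exact mul_le_mul_of_nonneg_left h1 hu.le
    linarith

/-- If `E ε = 0` and `E|ε|^{2+δ} = M_δ < ∞` for some `δ ≥ 0`, then for every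
`τ > 0`, `ψ_τ(ε)` is integrable and `|E[ψ_τ(ε)]| ≤ M_δ/τ^{1+δ}`. -/
theorem huber_score_bias {Ω : Type*} [MeasurableSpace Ω] (μ : Measure Ω)
    [IsProbabilityMeasure μ] (ε : Ω → ℝ) (hmeas : Measurable ε)
    (δ Mδ : ℝ) (hδ : 0 ≤ δ)
    (hint : Integrable ε μ) (hmean : ∫ ω, ε ω ∂μ = 0)
    (hmom_int : Integrable (fun ω => |ε ω| ^ ((2 : ℝ) + δ)) μ)
    (hmom : ∫ ω, |ε ω| ^ ((2 : ℝ) + δ) ∂μ = Mδ) :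
    ∀ τ : ℝ, 0 < τ →
      Integrable (fun ω => huberScore τ (ε ω)) μ ∧
      |∫ ω, huberScore τ (ε ω) ∂μ| ≤ Mδ / τ ^ ((1 : ℝ) + δ) := by
  intro τ hτ
  have hmeas' : Measurable (fun ω => huberScore τ (ε ω)) :=
    (measurable_huberScore τ).comp hmeas
  have hintψ : Integrable (fun ω => huberScore τ (ε ω)) μ := by
    refine Integrable.mono' (integrable_const τ) hmeas'.aestronglyMeasurable ?_
    filter_upwards with ω
    simpa using huberScore_abs_le τ (ε ω) hτ.le
  refine ⟨hintψ, ?_⟩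
  have key : ∫ ω, huberScore τ (ε ω) ∂μ = ∫ ω, (huberScore τ (ε ω) - ε ω) ∂μ := by
    rw [integral_sub hintψ hint, hmean, sub_zero]
  rw [key, ← hmom]
  calc |∫ ω, (huberScore τ (ε ω) - ε ω) ∂μ|
      ≤ ∫ ω, |huberScore τ (ε ω) - ε ω| ∂μ := by
        simpa using norm_integral_le_integral_norm (fun ω => huberScore τ (ε ω) - ε ω) (μ := μ)
    _ ≤ ∫ ω, |ε ω| ^ ((2 : ℝ) + δ) / τ ^ ((1 : ℝ) + δ) ∂μ := by
        refine integral_mono (hintψ.sub hint).abs (hmom_int.div_const _) ?_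
        intro ω
        dsimp only
        rw [abs_sub_comm]
        exact huberScore_pointwise τ (ε ω) δ hτ hδ
    _ = (∫ ω, |ε ω| ^ ((2 : ℝ) + δ) ∂μ) / τ ^ ((1 : ℝ) + δ) := by
        rw [integral_div]
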